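/- Let H₀ be a self-adjoint operator in a complex Hilbert space ℋ, let G and J = J* be bounded operators on ℋ, and set H₁ = H₀ + G*JG. Then for every z with Im z ≠ 0 the operator I + B₀(z)J is boundedly invertible, with (I − B₁(z)J)(I + B₀(z)J) = (I + B₀(z)J)(I − B₁(z)J) = I, and B₁(z) = (I + B₀(z)J)^{-1} B₀(z), where B_j(z) = G (H_j − z)^{-1} G*, j = 0,1. -/

import Mathlib

/-!
For `Im z ≠ 0` both `H₀ - z` and `H₁ - z` are invertible, being self-adjoint operators shifted off
their real spectrum. Since `(H₁ - z) - (H₀ - z) = G* J G`, the second resolvent identity gives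
`R₁ G* J G R₀ = R₀ - R₁ = R₀ G* J G R₁`, and conjugating by `G` and `G*` yields
`B₁ J B₀ = B₀ - B₁ = B₀ J B₁`. The rest is ring algebra: these two relations say exactly that
`1 - B₁ J` is a two-sided inverse of `1 + B₀ J` and that `(1 + B₀ J) B₁ = B₀`.
-/

open MeasureTheory Complex Filter Set ContinuousLinearMap Topology

noncomputable section

/-- The resolvent-type sandwiched operator `B(z) = G (H - z)⁻¹ G*`. -/
noncomputable def sandwichedResolvent {ℋ : Type*} [NormedAddCommGroup ℋ]
    [InnerProductSpace ℂ ℋ] [CompleteSpace ℋ] (G H : ℋ →L[ℂ] ℋ) (z : ℂ) : ℋ →L[ℂ] ℋ :=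
  G ∘L Ring.inverse (H - z • (1 : ℋ →L[ℂ] ℋ)) ∘L ContinuousLinearMap.adjoint G

theorem IsSelfAdjoint.isUnit_sub_smul_one {A : Type*} [CStarAlgebra A] {a : A}
    (ha : IsSelfAdjoint a) {z : ℂ} (hz : z.im ≠ 0) : IsUnit (a - z • 1) := by
  have hz : z ∉ spectrum ℂ a := fun hmem => hz (ha.im_eq_zero_of_mem_spectrum hmem)
  rw [spectrum.notMem_iff, Algebra.algebraMap_eq_smul_one] at hz
  simpa using hz.neg

section OnePlusMul

variable {R : Type*} [Ring R] {b₀ b₁ j : R}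

theorem one_sub_mul_mul_one_add_mul_eq_one (h : b₁ * j * b₀ = b₀ - b₁) :
    (1 - b₁ * j) * (1 + b₀ * j) = 1 := by
  calc (1 - b₁ * j) * (1 + b₀ * j) = 1 + (b₀ - b₁ - b₁ * j * b₀) * j := by noncomm_ring
    _ = 1 := by rw [h, sub_self, zero_mul, add_zero]

theorem one_add_mul_mul_one_sub_mul_eq_one (h : b₀ * j * b₁ = b₀ - b₁) :
    (1 + b₀ * j) * (1 - b₁ * j) = 1 := by
  calc (1 + b₀ * j) * (1 - b₁ * j) = 1 + (b₀ - b₁ - b₀ * j * b₁) * j := by noncomm_ring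
    _ = 1 := by rw [h, sub_self, zero_mul, add_zero]

theorem isUnit_one_add_mul_of_mul_mul_eq_sub (h₁₀ : b₁ * j * b₀ = b₀ - b₁)
    (h₀₁ : b₀ * j * b₁ = b₀ - b₁) : IsUnit (1 + b₀ * j) :=
  ⟨⟨_, _, one_add_mul_mul_one_sub_mul_eq_one h₀₁, one_sub_mul_mul_one_add_mul_eq_one h₁₀⟩, rfl⟩

end OnePlusMul

namespace Ring

variable {R : Type*} [Ring R]

theorem inverse_one_add_mul_mul_eq {b₀ b₁ j : R} (h₁₀ : b₁ * j * b₀ = b₀ - b₁)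
    (h₀₁ : b₀ * j * b₁ = b₀ - b₁) : (1 + b₀ * j)⁻¹ʳ * b₀ = b₁ := by
  have hmul : (1 + b₀ * j) * b₁ = b₀ := by
    rw [add_mul, one_mul, h₀₁, add_sub_cancel]
  calc (1 + b₀ * j)⁻¹ʳ * b₀ = (1 + b₀ * j)⁻¹ʳ * ((1 + b₀ * j) * b₁) := by rw [hmul]
    _ = b₁ := inverse_mul_cancel_left _ _ (isUnit_one_add_mul_of_mul_mul_eq_sub h₁₀ h₀₁)

section Sandwich

variable {a b g g' j : R}

/-- The second resolvent identity `b⁻¹ (b - a) a⁻¹ = a⁻¹ - b⁻¹`, conjugated by `g` and `g'`. -/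
theorem sandwich_inverse_mul_sandwich_inverse_of_sub_eq (h : IsUnit a ↔ IsUnit b)
    (hab : b - a = g' * j * g) :
    g * b⁻¹ʳ * g' * j * (g * a⁻¹ʳ * g') = g * a⁻¹ʳ * g' - g * b⁻¹ʳ * g' := by
  have hres : b⁻¹ʳ * (g' * j * g) * a⁻¹ʳ = a⁻¹ʳ - b⁻¹ʳ := by
    rw [← hab, ← neg_sub a b, mul_neg, neg_mul, ← inverse_sub_inverse h.symm, neg_sub]
  calc g * b⁻¹ʳ * g' * j * (g * a⁻¹ʳ * g') = g * (b⁻¹ʳ * (g' * j * g) * a⁻¹ʳ) * g' := by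
        noncomm_ring
    _ = g * a⁻¹ʳ * g' - g * b⁻¹ʳ * g' := by rw [hres]; noncomm_ring

theorem sandwich_inverse_mul_sandwich_inverse_of_sub_eq' (h : IsUnit a ↔ IsUnit b)
    (hab : b - a = g' * j * g) :
    g * a⁻¹ʳ * g' * j * (g * b⁻¹ʳ * g') = g * a⁻¹ʳ * g' - g * b⁻¹ʳ * g' := by
  calc g * a⁻¹ʳ * g' * j * (g * b⁻¹ʳ * g') = g * (a⁻¹ʳ * (g' * j * g) * b⁻¹ʳ) * g' := by
        noncomm_ring
    _ = g * a⁻¹ʳ * g' - g * b⁻¹ʳ * g' := by rw [← hab, ← inverse_sub_inverse h]; noncomm_ring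

end Sandwich

end Ring

/-- for `H₀` self-adjoint, `H₁ = H₀ + G*JG` with `G`, `J = J*` bounded,
and `Im z ≠ 0`, the operator `I + B₀(z)J` is boundedly invertible, with
`(I − B₁(z)J)(I + B₀(z)J) = (I + B₀(z)J)(I − B₁(z)J) = I` and
`B₁(z) = (I + B₀(z)J)⁻¹ B₀(z)`, where `B_j(z) = G (H_j − z)⁻¹ G*`. -/
theorem resolvent_identities {ℋ : Type*} [NormedAddCommGroup ℋ] [InnerProductSpace ℂ ℋ]
    [CompleteSpace ℋ]
    (H₀ G J : ℋ →L[ℂ] ℋ) (hH₀ : IsSelfAdjoint H₀) (hJ : IsSelfAdjoint J)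
    (H₁ : ℋ →L[ℂ] ℋ) (hH₁ : H₁ = H₀ + ContinuousLinearMap.adjoint G ∘L J ∘L G)
    (B₀ B₁ : ℂ → ℋ →L[ℂ] ℋ)
    (hB₀ : ∀ z : ℂ, B₀ z = sandwichedResolvent G H₀ z)
    (hB₁ : ∀ z : ℂ, B₁ z = sandwichedResolvent G H₁ z)
    (z : ℂ) (hz : z.im ≠ 0) :
    IsUnit (1 + B₀ z ∘L J) ∧
    (1 - B₁ z ∘L J) ∘L (1 + B₀ z ∘L J) = 1 ∧
    (1 + B₀ z ∘L J) ∘L (1 - B₁ z ∘L J) = 1 ∧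
    B₁ z = Ring.inverse (1 + B₀ z ∘L J) ∘L B₀ z := by
  have hH₁sa : IsSelfAdjoint H₁ := hH₁ ▸ hH₀.add (hJ.adjoint_conj G)
  have hunit : IsUnit (H₀ - z • 1) ↔ IsUnit (H₁ - z • 1) :=
    iff_of_true (hH₀.isUnit_sub_smul_one hz) (hH₁sa.isUnit_sub_smul_one hz)
  have hdiff : (H₁ - z • 1) - (H₀ - z • 1) = adjoint G * J * G := by
    rw [sub_sub_sub_cancel_right, hH₁, add_sub_cancel_left, mul_assoc]; rfl
  have hB₀z : B₀ z = G * Ring.inverse (H₀ - z • 1) * adjoint G := by rw [hB₀, mul_assoc]; rfl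
  have hB₁z : B₁ z = G * Ring.inverse (H₁ - z • 1) * adjoint G := by rw [hB₁, mul_assoc]; rfl
  have h₁₀ : B₁ z * J * B₀ z = B₀ z - B₁ z := by
    rw [hB₀z, hB₁z]; exact Ring.sandwich_inverse_mul_sandwich_inverse_of_sub_eq hunit hdiff
  have h₀₁ : B₀ z * J * B₁ z = B₀ z - B₁ z := by
    rw [hB₀z, hB₁z]; exact Ring.sandwich_inverse_mul_sandwich_inverse_of_sub_eq' hunit hdiff
  exact ⟨isUnit_one_add_mul_of_mul_mul_eq_sub h₁₀ h₀₁, one_sub_mul_mul_one_add_mul_eq_one h₁₀,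
    one_add_mul_mul_one_sub_mul_eq_one h₀₁, (Ring.inverse_one_add_mul_mul_eq h₁₀ h₀₁).symm⟩
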